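/- Let d ≥ 1, s ∈ (0,1), and let φ : ℝ^d → ℝ be smooth and compactly supported. Define l_s(φ)(x) := ∫_{ℝ^d} (φ(x)-φ(y))² |x-y|^{-(d+2s)} dy. Then: (a) l_s(φ)(x) is finite for every x ∈ ℝ^d; (b) l_s(φ) is continuous on ℝ^d; (c) there exists a constant C_φ > 0 such that l_s(φ)(x) ≤ C_φ (1+|x|)^{-(d+2s)} for all x ∈ ℝ^d, i.e. l_s(φ) decays at least like |x|^{-d-2s} at infinity. -/

import Mathlib

open MeasureTheory Filter Topology Set
open scoped ENNReal NNReal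

noncomputable section

/-- `d`-dimensional Euclidean space. -/
abbrev Ed (d : ℕ) : Type := EuclideanSpace ℝ (Fin d)

/-- The fractional Laplacian of order `s` with normalizing constant `κ`,
defined by the second-difference integral
`(-Δ)^s φ(x) = (κ/2) ∫ (2φ(x) - φ(x+z) - φ(x-z)) |z|^{-(d+2s)} dz`. -/
def fracLap (d : ℕ) (s κ : ℝ) (φ : Ed d → ℝ) (x : Ed d) : ℝ :=
  (κ / 2) * ∫ z : Ed d, (2 * φ x - φ (x + z) - φ (x - z)) / ‖z‖ ^ ((d : ℝ) + 2 * s)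

/-- The nonlocal quadratic functional
`l_s(φ)(x) = ∫ (φ(x)-φ(y))² |x-y|^{-(d+2s)} dy`. -/
def lsFun (d : ℕ) (s : ℝ) (φ : Ed d → ℝ) (x : Ed d) : ℝ :=
  ∫ y : Ed d, (φ x - φ y) ^ 2 / ‖x - y‖ ^ ((d : ℝ) + 2 * s)

open Metric Real Module Function

/-! Lipschitz continuity and boundedness of `φ` give `(φ x - φ y)² ≤ C min(‖x - y‖², 1)`, and the
kernel `min(‖z‖², 1) ‖z‖^{-(d+2s)}` is integrable precisely because `0 < s < 1`. After the shift
`y = x - z` this one kernel dominates the integrand uniformly in `x`: this gives integrability,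
continuity by dominated convergence, and a uniform bound. If `supp φ ⊆ B(0, R)` and
`‖x‖ ≥ 2R + 1`, then `φ x = 0` and `‖x - y‖ ≥ (1 + ‖x‖)/2` on the support, so
`l_s(φ)(x) ≤ 2^{d+2s} ‖φ‖₂² (1 + ‖x‖)^{-(d+2s)}`. -/

lemma sq_sub_div_rpow_le_of_lipschitzWith {F : Type*} [SeminormedAddCommGroup F] {φ : F → ℝ}
    {L : ℝ≥0} {M : ℝ} (hL : LipschitzWith L φ) (hM : ∀ x, ‖φ x‖ ≤ M) (p : ℝ) (x y : F) :
    (φ x - φ y) ^ 2 / ‖x - y‖ ^ p ≤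
      max ((L : ℝ) ^ 2) (4 * M ^ 2) * (min (‖x - y‖ ^ 2) 1 / ‖x - y‖ ^ p) := by
  have hlip : |φ x - φ y| ≤ L * ‖x - y‖ := by
    simpa [Real.dist_eq, dist_eq_norm] using hL.dist_le_mul x y
  have hbdd : |φ x - φ y| ≤ 2 * M :=
    (norm_sub_le (φ x) (φ y)).trans (by linarith [hM x, hM y])
  have hsq : (φ x - φ y) ^ 2 ≤ max ((L : ℝ) ^ 2) (4 * M ^ 2) * min (‖x - y‖ ^ 2) 1 := by
    rw [mul_min_of_nonneg _ _ ((sq_nonneg _).trans (le_max_left _ _)), mul_one]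
    refine le_min ?_ ?_
    · calc (φ x - φ y) ^ 2 ≤ (L * ‖x - y‖) ^ 2 := sq_le_sq' (abs_le.1 hlip).1 (abs_le.1 hlip).2
        _ ≤ max ((L : ℝ) ^ 2) (4 * M ^ 2) * ‖x - y‖ ^ 2 := by
          rw [mul_pow]
          exact mul_le_mul_of_nonneg_right (le_max_left _ _) (sq_nonneg _)
    · calc (φ x - φ y) ^ 2 ≤ (2 * M) ^ 2 := sq_le_sq' (abs_le.1 hbdd).1 (abs_le.1 hbdd).2
        _ ≤ max ((L : ℝ) ^ 2) (4 * M ^ 2) := by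
          rw [mul_pow]
          norm_num
  rw [← mul_div_assoc]
  exact div_le_div_of_nonneg_right hsq (by positivity)

section HaarMeasure

variable {E : Type*} [NormedAddCommGroup E] [NormedSpace ℝ E] [FiniteDimensional ℝ E]
  [MeasurableSpace E] [BorelSpace E] {μ : Measure E} [μ.IsAddHaarMeasure]

lemma integrable_min_sq_one_div_rpow (hd : 1 ≤ finrank ℝ E) {p : ℝ}
    (hp : (finrank ℝ E : ℝ) < p) (hp2 : p < finrank ℝ E + 2) :
    Integrable (fun z : E => min (‖z‖ ^ 2) 1 / ‖z‖ ^ p) μ := by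
  have hp0 : 0 < p := (Nat.cast_nonneg _).trans_lt hp
  have hmeas : AEStronglyMeasurable (fun z : E => min (‖z‖ ^ 2) 1 / ‖z‖ ^ p) μ :=
    (by fun_prop : Measurable fun z : E => min (‖z‖ ^ 2) 1 / ‖z‖ ^ p).aestronglyMeasurable
  have hnonneg (z : E) : 0 ≤ min (‖z‖ ^ 2) 1 / ‖z‖ ^ p := by positivity
  have hnear : IntegrableOn (fun z : E => min (‖z‖ ^ 2) 1 / ‖z‖ ^ p) (ball 0 1) μ := by
    refine integrableOn_ball_of_norm_le_rpow hd (C := 1) (α := p - 2) (by linarith)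
      (ae_of_all _ fun z => ?_) hmeas
    rw [Real.norm_of_nonneg (hnonneg z), one_mul, neg_sub]
    rcases eq_or_ne z 0 with rfl | hz
    · rw [norm_zero, zero_rpow hp0.ne', div_zero]
      positivity
    · have hz : 0 < ‖z‖ := norm_pos_iff.2 hz
      calc min (‖z‖ ^ 2) 1 / ‖z‖ ^ p ≤ ‖z‖ ^ 2 / ‖z‖ ^ p :=
            div_le_div_of_nonneg_right (min_le_left _ _) (by positivity)
        _ = ‖z‖ ^ (2 - p) := by rw [rpow_sub hz, rpow_two]
  have hfar : IntegrableOn (fun z : E => min (‖z‖ ^ 2) 1 / ‖z‖ ^ p) (ball 0 1)ᶜ μ := by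
    refine ((integrable_one_add_norm hp).const_mul (2 ^ p)).integrableOn.mono' hmeas.restrict ?_
    rw [ae_restrict_iff' measurableSet_ball.compl]
    refine ae_of_all _ fun z hz => ?_
    have hz : 1 ≤ ‖z‖ := by simpa using hz
    rw [Real.norm_of_nonneg (hnonneg z)]
    calc min (‖z‖ ^ 2) 1 / ‖z‖ ^ p ≤ 1 / ‖z‖ ^ p :=
          div_le_div_of_nonneg_right (min_le_right _ _) (by positivity)
      _ = ‖z‖ ^ (-p) := by rw [rpow_neg (norm_nonneg z), one_div]
      _ ≤ ((1 + ‖z‖) / 2) ^ (-p) :=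
          rpow_le_rpow_of_nonpos (by positivity) (by linarith) (by linarith)
      _ = 2 ^ p * (1 + ‖z‖) ^ (-p) := by
          rw [div_rpow (by positivity) zero_le_two, rpow_neg zero_le_two, div_inv_eq_mul,
            mul_comm]
  simpa using hnear.union hfar

variable {φ : E → ℝ} {L : ℝ≥0} {M p : ℝ}

lemma integrable_sq_sub_div_rpow (hd : 1 ≤ finrank ℝ E) (hp : (finrank ℝ E : ℝ) < p)
    (hp2 : p < finrank ℝ E + 2) (hL : LipschitzWith L φ) (hM : ∀ x, ‖φ x‖ ≤ M) (x : E) :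
    Integrable (fun y => (φ x - φ y) ^ 2 / ‖x - y‖ ^ p) μ := by
  have hφ := hL.continuous
  refine (((integrable_min_sq_one_div_rpow hd hp hp2).comp_sub_left x).const_mul
    (max ((L : ℝ) ^ 2) (4 * M ^ 2))).mono' (by fun_prop : Measurable _).aestronglyMeasurable
    (ae_of_all _ fun y => ?_)
  rw [Real.norm_of_nonneg (by positivity)]
  exact sq_sub_div_rpow_le_of_lipschitzWith hL hM p x y

lemma integral_sq_sub_div_rpow_le (hd : 1 ≤ finrank ℝ E) (hp : (finrank ℝ E : ℝ) < p)
    (hp2 : p < finrank ℝ E + 2) (hL : LipschitzWith L φ) (hM : ∀ x, ‖φ x‖ ≤ M) (x : E) :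
    ∫ y, (φ x - φ y) ^ 2 / ‖x - y‖ ^ p ∂μ ≤
      max ((L : ℝ) ^ 2) (4 * M ^ 2) * ∫ z, min (‖z‖ ^ 2) 1 / ‖z‖ ^ p ∂μ := by
  calc ∫ y, (φ x - φ y) ^ 2 / ‖x - y‖ ^ p ∂μ
      ≤ ∫ y, max ((L : ℝ) ^ 2) (4 * M ^ 2) * (min (‖x - y‖ ^ 2) 1 / ‖x - y‖ ^ p) ∂μ :=
        integral_mono (integrable_sq_sub_div_rpow hd hp hp2 hL hM x)
          (((integrable_min_sq_one_div_rpow hd hp hp2).comp_sub_left x).const_mul _)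
          (sq_sub_div_rpow_le_of_lipschitzWith hL hM p x)
    _ = max ((L : ℝ) ^ 2) (4 * M ^ 2) * ∫ z, min (‖z‖ ^ 2) 1 / ‖z‖ ^ p ∂μ := by
        rw [integral_const_mul,
          integral_sub_left_eq_self (fun z => min (‖z‖ ^ 2) 1 / ‖z‖ ^ p) μ x]

lemma continuous_integral_sq_sub_div_rpow (hd : 1 ≤ finrank ℝ E) (hp : (finrank ℝ E : ℝ) < p)
    (hp2 : p < finrank ℝ E + 2) (hL : LipschitzWith L φ) (hM : ∀ x, ‖φ x‖ ≤ M) :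
    Continuous fun x => ∫ y, (φ x - φ y) ^ 2 / ‖x - y‖ ^ p ∂μ := by
  have hφ := hL.continuous
  have hshift (x : E) : ∫ y, (φ x - φ y) ^ 2 / ‖x - y‖ ^ p ∂μ =
      ∫ z, (φ x - φ (x - z)) ^ 2 / ‖z‖ ^ p ∂μ := by
    rw [← integral_sub_left_eq_self _ μ x]
    simp only [sub_sub_cancel]
  simp_rw [hshift]
  refine continuous_of_dominated
    (bound := fun z => max ((L : ℝ) ^ 2) (4 * M ^ 2) * (min (‖z‖ ^ 2) 1 / ‖z‖ ^ p))
    (fun x => (by fun_prop : Measurable _).aestronglyMeasurable)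
    (fun x => ae_of_all _ fun z => ?_)
    ((integrable_min_sq_one_div_rpow hd hp hp2).const_mul _)
    (ae_of_all _ fun z => by fun_prop)
  rw [Real.norm_of_nonneg (by positivity)]
  simpa only [sub_sub_cancel] using sq_sub_div_rpow_le_of_lipschitzWith hL hM p x (x - z)

end HaarMeasure

lemma integral_sq_sub_div_rpow_le_of_support_subset {E : Type*} [NormedAddCommGroup E]
    [MeasurableSpace E] {μ : Measure E} {φ : E → ℝ} {p R : ℝ} (hp : 0 ≤ p)
    (hR : support φ ⊆ closedBall 0 R) (hφ2 : Integrable (fun y => φ y ^ 2) μ) {x : E}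
    (hx : 2 * R + 1 ≤ ‖x‖) :
    ∫ y, (φ x - φ y) ^ 2 / ‖x - y‖ ^ p ∂μ ≤
      (2 ^ p * ∫ y, φ y ^ 2 ∂μ) * (1 + ‖x‖) ^ (-p) := by
  have hφx : φ x = 0 := by
    by_contra h
    linarith [mem_closedBall_zero_iff.1 (hR h), norm_nonneg x]
  have hpt (y : E) : (φ x - φ y) ^ 2 / ‖x - y‖ ^ p ≤ φ y ^ 2 * ((1 + ‖x‖) / 2) ^ (-p) := by
    by_cases hy : φ y = 0
    · simp [hφx, hy]
    have hxy : (1 + ‖x‖) / 2 ≤ ‖x - y‖ := by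
      linarith [norm_sub_norm_le x y, mem_closedBall_zero_iff.1 (hR hy)]
    rw [hφx, zero_sub, neg_sq, rpow_neg (by positivity), ← div_eq_mul_inv]
    exact div_le_div_of_nonneg_left (sq_nonneg _) (by positivity)
      (rpow_le_rpow (by positivity) hxy hp)
  calc ∫ y, (φ x - φ y) ^ 2 / ‖x - y‖ ^ p ∂μ ≤ ∫ y, φ y ^ 2 * ((1 + ‖x‖) / 2) ^ (-p) ∂μ :=
        integral_mono_of_nonneg (ae_of_all _ fun y => by positivity) (hφ2.mul_const _)
          (ae_of_all _ hpt)
    _ = (2 ^ p * ∫ y, φ y ^ 2 ∂μ) * (1 + ‖x‖) ^ (-p) := by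
        rw [integral_mul_const, div_rpow (by positivity) zero_le_two, rpow_neg zero_le_two,
          div_inv_eq_mul]
        ring

lemma exists_pos_forall_le_mul_one_add_norm_rpow_neg {E : Type*} [SeminormedAddCommGroup E]
    {f : E → ℝ} {p B C T : ℝ} (hp : 0 ≤ p) (hB : ∀ x, f x ≤ B)
    (hfar : ∀ x, T ≤ ‖x‖ → f x ≤ C * (1 + ‖x‖) ^ (-p)) :
    ∃ C' : ℝ, 0 < C' ∧ ∀ x, f x ≤ C' * (1 + ‖x‖) ^ (-p) := by
  set C' := max (max C (B * (1 + T) ^ p)) 1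
  refine ⟨C', lt_max_of_lt_right one_pos, fun x => ?_⟩
  rcases le_or_gt T ‖x‖ with hx | hx
  · exact (hfar x hx).trans
      (mul_le_mul_of_nonneg_right (le_max_of_le_left (le_max_left _ _)) (by positivity))
  rcases le_or_gt B 0 with hB0 | hB0
  · exact (hB x).trans (hB0.trans (by positivity))
  have hT : 0 < 1 + T := by linarith [norm_nonneg x]
  calc f x ≤ B := hB x
    _ = B * (1 + T) ^ p * (1 + T) ^ (-p) := by
        rw [mul_assoc, ← rpow_add hT, add_neg_cancel, rpow_zero, mul_one]
    _ ≤ C' * (1 + ‖x‖) ^ (-p) :=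
        mul_le_mul (le_max_of_le_left (le_max_right _ _))
          (rpow_le_rpow_of_nonpos (by positivity) (by linarith) (by linarith))
          (by positivity) (by positivity)

/-- **Basic properties of `l_s` of a test function.** For `φ ∈ C_c^∞(ℝ^d)`:
(a) the integral defining `l_s(φ)(x)` converges for every `x`;
(b) `l_s(φ)` is continuous; (c) `l_s(φ)(x) ≤ C_φ (1+|x|)^{-(d+2s)}` for some
`C_φ > 0`. -/
theorem lsFun_testFn_properties
    (d : ℕ) (hd : 0 < d) (s : ℝ) (hs0 : 0 < s) (hs1 : s < 1)
    (φ : Ed d → ℝ) (hφ : ContDiff ℝ (⊤ : ℕ∞) φ) (hφc : HasCompactSupport φ) :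
    (∀ x : Ed d, Integrable
      (fun y : Ed d => (φ x - φ y) ^ 2 / ‖x - y‖ ^ ((d : ℝ) + 2 * s))) ∧
    Continuous (lsFun d s φ) ∧
    (∃ Cφ : ℝ, 0 < Cφ ∧ ∀ x : Ed d,
      lsFun d s φ x ≤ Cφ * (1 + ‖x‖) ^ (-((d : ℝ) + 2 * s))) := by
  have hdim : finrank ℝ (Ed d) = d := finrank_euclideanSpace_fin
  have hd : 1 ≤ finrank ℝ (Ed d) := by rw [hdim]; exact hd
  have hp : (finrank ℝ (Ed d) : ℝ) < d + 2 * s := by rw [hdim]; linarith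
  have hp2 : (d : ℝ) + 2 * s < finrank ℝ (Ed d) + 2 := by rw [hdim]; linarith
  obtain ⟨L, hL⟩ := hφ.lipschitzWith_of_hasCompactSupport hφc (by simp)
  obtain ⟨M, hM⟩ := hφc.exists_bound_of_continuous hφ.continuous
  obtain ⟨R, hR⟩ := hφc.isBounded.subset_closedBall 0
  have hφ2 : Integrable fun y => φ y ^ 2 :=
    (hφ.continuous.pow 2).integrable_of_hasCompactSupport
      (hφc.comp_left (zero_pow two_ne_zero))
  exact ⟨integrable_sq_sub_div_rpow hd hp hp2 hL hM,
    continuous_integral_sq_sub_div_rpow hd hp hp2 hL hM,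
    exists_pos_forall_le_mul_one_add_norm_rpow_neg (by positivity)
      (integral_sq_sub_div_rpow_le hd hp hp2 hL hM)
      fun x hx => integral_sq_sub_div_rpow_le_of_support_subset (by positivity)
        ((subset_tsupport φ).trans hR) hφ2 hx⟩
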